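/- Let m ≥ 0, let λ ∉ σ(D₀), and let k be the unique point with 0 < |k| < 1 and λ² = m² + 2 − k − k⁻¹. Then for every j ∈ ℤ one has |T_j(k)|_HS ≤ (|C_j(k)| / |k⁻¹ − k|) · (|λ − m| + |λ + m|), where |C₀(k)| = 1 and |C_j(k)| = |k|^{|j| − 1/2} for j ≠ 0, and |·|_HS denotes the Hilbert–Schmidt (Frobenius) norm of a 2×2 matrix. -/

import Mathlib

/-!
With `a = |λ − m|`, `b = |λ + m|`, the relation `λ² = m² + 2 − k − k⁻¹` reads
`(λ − m)(λ + m) = −(1 − k)² / k`, so `|1 − k|² = |k| a b` and `|1 − k⁻¹|² = a b / |k|`.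
Hence `|k⁻¹ − k|² |T₀|²_HS = a² + 2|k| a b + b²` and
`|k⁻¹ − k|² |T₁|²_HS = |k| (|k| a² + |k|² a b + a b + |k| b²)`, both bounded via `|k| < 1`
by `(a + b)²` resp. `|k| (a + b)²`. For `j ≠ 0`, `T_j` is `k^{|j|−1} T₁` up to transposition.
-/

open scoped ComplexOrder
open Matrix

noncomputable section

abbrev Mat2 : Type := Matrix (Fin 2) (Fin 2) ℂ
abbrev Vec2 : Type := EuclideanSpace ℂ (Fin 2)
abbrev Hsp : Type := lp (fun _ : ℤ => Vec2) 2

/-- A `2×2` complex matrix acting on `ℂ²` as a continuous linear map. -/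
def mAct (A : Mat2) : Vec2 →L[ℂ] Vec2 := Matrix.toEuclideanCLM (𝕜 := ℂ) A

/-- The spectral (operator) norm of a `2×2` complex matrix. -/
def specNorm (A : Mat2) : ℝ := ‖mAct A‖

/-- The Hilbert–Schmidt (Frobenius) norm of a `2×2` complex matrix. -/
def hsNorm (A : Mat2) : ℝ := Real.sqrt (∑ i, ∑ j, ‖A i j‖ ^ 2)

def bMat (m : ℝ) : Mat2 := !![(-m : ℂ), 1; 1, (m : ℂ)]

def aMat : Mat2 := !![0, 0; -1, 0]

/-- `D0` is the free discrete Dirac operator with mass `m`. -/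
def IsFreeDirac (m : ℝ) (D0 : Hsp →L[ℂ] Hsp) : Prop :=
  ∀ u : Hsp, ∀ n : ℤ,
    (D0 u) n = mAct aMat.transpose (u (n - 1)) + mAct (bMat m) (u n) + mAct aMat (u (n + 1))

/-- `Vop` is the block-diagonal operator with blocks `υ n`. -/
def IsBlockDiagOp (υ : ℤ → Mat2) (Vop : Hsp →L[ℂ] Hsp) : Prop :=
  ∀ u : Hsp, ∀ n : ℤ, (Vop u) n = mAct (υ n) (u n)

/-- The spectrum `[−√(m²+4), −m] ∪ [m, √(m²+4)]` as a subset of `ℂ`. -/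
def sigma0 (m : ℝ) : Set ℂ :=
  Complex.ofReal '' (Set.Icc (-Real.sqrt (m ^ 2 + 4)) (-m) ∪ Set.Icc m (Real.sqrt (m ^ 2 + 4)))

def T0mat (m : ℝ) (lam k : ℂ) : Mat2 :=
  (k⁻¹ - k)⁻¹ • !![lam - m, 1 - k; 1 - k, lam + m]

def T1mat (m : ℝ) (lam k : ℂ) : Mat2 :=
  (k * (k⁻¹ - k)⁻¹) • !![lam - m, 1 - k; 1 - k⁻¹, lam + m]

def Tmat (m : ℝ) (lam k : ℂ) : ℤ → Mat2 := fun j =>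
  if j = 0 then T0mat m lam k
  else if 0 < j then k ^ (j.toNat - 1) • T1mat m lam k
  else (k ^ ((-j).toNat - 1) • T1mat m lam k).transpose

/-- The positive semidefinite square root (removed from Mathlib; old definition restored). -/
def Matrix.PosSemidef.sqrt {n : Type*} [Fintype n] [DecidableEq n] {𝕜 : Type*} [RCLike 𝕜]
    {A : Matrix n n 𝕜} (hA : A.PosSemidef) : Matrix n n 𝕜 :=
  hA.1.eigenvectorUnitary.1 * diagonal ((↑) ∘ (√·) ∘ hA.1.eigenvalues) *
    (star hA.1.eigenvectorUnitary : Matrix n n 𝕜)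

theorem Matrix.PosSemidef.posSemidef_sqrt {n : Type*} [Fintype n] [DecidableEq n] {𝕜 : Type*}
    [RCLike 𝕜] {A : Matrix n n 𝕜} (hA : A.PosSemidef) : hA.sqrt.PosSemidef := by
  unfold Matrix.PosSemidef.sqrt
  rw [star_eq_conjTranspose]
  refine Matrix.PosSemidef.mul_mul_conjTranspose_same ?_ _
  refine (Matrix.posSemidef_diagonal_iff).2 fun i => ?_
  simp only [Function.comp_apply, RCLike.ofReal_nonneg]
  exact Real.sqrt_nonneg _

def wMat (υ : ℤ → Mat2) (n : ℤ) : Mat2 :=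
  (Matrix.posSemidef_conjTranspose_mul_self (υ n)).sqrt

def sqrtwMat (υ : ℤ → Mat2) (n : ℤ) : Mat2 :=
  (Matrix.posSemidef_conjTranspose_mul_self (υ n)).posSemidef_sqrt.sqrt

/-- The Birman–Schwinger operator `K(z) = √W (D₀ − z)⁻¹ U √W`. -/
def Kop (D0 sW Uop : Hsp →L[ℂ] Hsp) (z : ℂ) : Hsp →L[ℂ] Hsp :=
  sW * Ring.inverse (D0 - z • (1 : Hsp →L[ℂ] Hsp)) * Uop * sW

/-- The element of `ℓ²(ℤ, ℂ²)` supported at site `j` equal to the `β`-th standard basis vector. -/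
def deltaVec (j : ℤ) (β : Fin 2) : Hsp := lp.single 2 j (EuclideanSpace.single β (1 : ℂ))


/-- The constant `C_j(k)`:  `1` for `j = 0` and `|k|^{|j| − 1/2}` for `j ≠ 0`. -/
def CFun (k : ℂ) (j : ℤ) : ℝ :=
  if j = 0 then 1 else ‖k‖ ^ ((j.natAbs : ℝ) - 1 / 2)

lemma hsNorm_smul (s : ℂ) (A : Mat2) : hsNorm (s • A) = ‖s‖ * hsNorm A := by
  simp only [hsNorm, Matrix.smul_apply, smul_eq_mul, norm_mul, mul_pow, ← Finset.mul_sum]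
  rw [Real.sqrt_mul (sq_nonneg _), Real.sqrt_sq (norm_nonneg s)]

lemma hsNorm_transpose (A : Mat2) : hsNorm Aᵀ = hsNorm A := by
  simp only [hsNorm, transpose_apply]
  rw [Finset.sum_comm]

lemma hsNorm_of (p q r t : ℂ) :
    hsNorm !![p, q; r, t] = Real.sqrt (‖p‖ ^ 2 + ‖q‖ ^ 2 + ‖r‖ ^ 2 + ‖t‖ ^ 2) := by
  simp [hsNorm, Fin.sum_univ_two, add_assoc]

section DispersionRelation

variable {μ lam k : ℂ}

lemma norm_one_sub_sq_eq (hk : k ≠ 0) (hrel : lam ^ 2 = μ ^ 2 + 2 - k - k⁻¹) :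
    ‖1 - k‖ ^ 2 = ‖k‖ * (‖lam - μ‖ * ‖lam + μ‖) := by
  have h : (1 - k) ^ 2 = -(k * ((lam - μ) * (lam + μ))) := by
    linear_combination k * hrel - mul_inv_cancel₀ hk
  rw [← norm_pow, h, norm_neg, norm_mul, norm_mul]

lemma norm_one_sub_inv_sq_eq (hk : k ≠ 0) (hrel : lam ^ 2 = μ ^ 2 + 2 - k - k⁻¹) :
    ‖k‖ * ‖1 - k⁻¹‖ ^ 2 = ‖lam - μ‖ * ‖lam + μ‖ := by
  have hk' : 0 < ‖k‖ := norm_pos_iff.2 hk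
  have h : ‖1 - k⁻¹‖ = ‖1 - k‖ / ‖k‖ := by
    rw [← norm_div, sub_div, one_div, div_self hk, ← norm_neg, neg_sub]
  rw [h, div_pow, norm_one_sub_sq_eq hk hrel]
  field_simp

end DispersionRelation

section Blocks

variable {m : ℝ} {lam k : ℂ}

lemma hsNorm_T0mat_le (hk0 : 0 < ‖k‖) (hk1 : ‖k‖ < 1)
    (hrel : lam ^ 2 = (m : ℂ) ^ 2 + 2 - k - k⁻¹) :
    hsNorm (T0mat m lam k) ≤ 1 / ‖k⁻¹ - k‖ * (‖lam - (m : ℂ)‖ + ‖lam + (m : ℂ)‖) := by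
  set a := ‖lam - (m : ℂ)‖
  set b := ‖lam + (m : ℂ)‖
  have hc := norm_one_sub_sq_eq (norm_pos_iff.1 hk0) hrel
  have hab : 0 ≤ a * b := by positivity
  have hS : a ^ 2 + ‖1 - k‖ ^ 2 + ‖1 - k‖ ^ 2 + b ^ 2 ≤ (a + b) ^ 2 := by
    rw [hc]
    nlinarith [mul_le_mul_of_nonneg_right hk1.le hab]
  rw [T0mat, hsNorm_smul, hsNorm_of, norm_inv, one_div]
  gcongr
  calc _ ≤ Real.sqrt ((a + b) ^ 2) := Real.sqrt_le_sqrt hS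
    _ = a + b := Real.sqrt_sq (by positivity)

lemma hsNorm_T1mat_le (hk0 : 0 < ‖k‖) (hk1 : ‖k‖ < 1)
    (hrel : lam ^ 2 = (m : ℂ) ^ 2 + 2 - k - k⁻¹) :
    hsNorm (T1mat m lam k) ≤
      Real.sqrt ‖k‖ / ‖k⁻¹ - k‖ * (‖lam - (m : ℂ)‖ + ‖lam + (m : ℂ)‖) := by
  set K := ‖k‖
  set a := ‖lam - (m : ℂ)‖
  set b := ‖lam + (m : ℂ)‖
  set S := a ^ 2 + ‖1 - k‖ ^ 2 + ‖1 - k⁻¹‖ ^ 2 + b ^ 2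
  have hk := norm_pos_iff.1 hk0
  have hc := norm_one_sub_sq_eq hk hrel
  have hc' := norm_one_sub_inv_sq_eq hk hrel
  have hab : 0 ≤ a * b := by positivity
  have hKS : K * S ≤ (a + b) ^ 2 := by
    have hK2 : K ^ 2 ≤ 1 := pow_le_one₀ hk0.le hk1.le
    have : K * S = K * (a ^ 2 + b ^ 2) + K ^ 2 * (a * b) + a * b := by
      linear_combination K * hc + hc'
    rw [this]
    nlinarith [mul_le_mul_of_nonneg_right hk1.le (add_nonneg (sq_nonneg a) (sq_nonneg b)),
      mul_le_mul_of_nonneg_right hK2 hab]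
  have hsqrt : K * Real.sqrt S ≤ Real.sqrt K * (a + b) := by
    calc K * Real.sqrt S = Real.sqrt K * Real.sqrt (K * S) := by
          rw [Real.sqrt_mul hk0.le, ← mul_assoc, Real.mul_self_sqrt hk0.le]
      _ ≤ Real.sqrt K * Real.sqrt ((a + b) ^ 2) := by gcongr
      _ = Real.sqrt K * (a + b) := by rw [Real.sqrt_sq (by positivity)]
  rw [T1mat, hsNorm_smul, hsNorm_of, norm_mul, norm_inv]
  calc K * ‖k⁻¹ - k‖⁻¹ * Real.sqrt S = ‖k⁻¹ - k‖⁻¹ * (K * Real.sqrt S) := by ring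
    _ ≤ ‖k⁻¹ - k‖⁻¹ * (Real.sqrt K * (a + b)) := by gcongr
    _ = _ := by ring

lemma hsNorm_Tmat_of_ne_zero {j : ℤ} (hj : j ≠ 0) :
    hsNorm (Tmat m lam k j) = ‖k‖ ^ (j.natAbs - 1) * hsNorm (T1mat m lam k) := by
  rcases hj.lt_or_gt with hneg | hpos
  · have hn : (-j).toNat = j.natAbs := by omega
    simp only [Tmat, if_neg hj, if_neg (not_lt.2 hneg.le), hsNorm_transpose, hsNorm_smul,
      norm_pow, hn]
  · have hn : j.toNat = j.natAbs := by omega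
    simp only [Tmat, if_neg hj, if_pos hpos, hsNorm_smul, norm_pow, hn]

end Blocks

lemma abs_CFun_of_ne_zero {k : ℂ} (hk : 0 < ‖k‖) {j : ℤ} (hj : j ≠ 0) :
    |CFun k j| = ‖k‖ ^ (j.natAbs - 1) * Real.sqrt ‖k‖ := by
  have hexp : (j.natAbs : ℝ) - 1 / 2 = ((j.natAbs - 1 : ℕ) : ℝ) + 1 / 2 := by
    have : 1 ≤ j.natAbs := Int.natAbs_pos.2 hj
    push_cast [this]
    ring
  rw [CFun, if_neg hj, abs_of_nonneg (by positivity), hexp, Real.rpow_add hk,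
    Real.rpow_natCast, Real.sqrt_eq_rpow]

theorem stmt7_general (m : ℝ) (lam k : ℂ)
    (hk0 : 0 < ‖k‖) (hk1 : ‖k‖ < 1)
    (hrel : lam ^ 2 = (m : ℂ) ^ 2 + 2 - k - k⁻¹) (j : ℤ) :
    hsNorm (Tmat m lam k j) ≤
      |CFun k j| / ‖k⁻¹ - k‖ *
        (‖lam - (m : ℂ)‖ + ‖lam + (m : ℂ)‖) := by
  rcases eq_or_ne j 0 with rfl | hj
  · simpa [Tmat, CFun] using hsNorm_T0mat_le hk0 hk1 hrel
  · rw [hsNorm_Tmat_of_ne_zero hj, abs_CFun_of_ne_zero hk0 hj, mul_div_assoc, mul_assoc]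
    exact mul_le_mul_of_nonneg_left (hsNorm_T1mat_le hk0 hk1 hrel) (by positivity)

/-- Estimate of the Hilbert–Schmidt norms of the resolvent blocks:
`|T_j(k)|_HS ≤ (|C_j(k)| / |k⁻¹ − k|) (|λ − m| + |λ + m|)`. -/
theorem stmt7 (m : ℝ) (hm : 0 ≤ m) (lam k : ℂ) (hlam : lam ∉ sigma0 m)
    (hk0 : 0 < ‖k‖) (hk1 : ‖k‖ < 1)
    (hrel : lam ^ 2 = (m : ℂ) ^ 2 + 2 - k - k⁻¹) (j : ℤ) :
    hsNorm (Tmat m lam k j) ≤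
      |CFun k j| / ‖k⁻¹ - k‖ *
        (‖lam - (m : ℂ)‖ + ‖lam + (m : ℂ)‖) :=
  stmt7_general m lam k hk0 hk1 hrel j
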